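/- arXiv:1602.06941 — 5 statements merged into one kernel-verified Lean document; each statement's English description precedes it below -/
import Mathlib

section
/- For two m-dimensional linear subspaces V₁, V₂ of a Hilbert space H, the operator norm of the difference of their orthogonal projections equals the Hausdorff distance between V₁ ∩ B(0,1) and V₂ ∩ B(0,1). -/
/-!
Let `P`, `Q` be the orthogonal projections onto `U`, `K`. For `x` in the unit ball, the nearest
point of `K ∩ B(0,1)` to `x` is `Qx`, so `dist(x, K ∩ B(0,1)) = ‖(1 - Q)x‖` and the Hausdorff
distance equals `max ‖(1 - Q)P‖ ‖(1 - P)Q‖`. The same maximum is `‖P - Q‖`: `(P - Q)x = P(1 - Q)x - (1 - P)Qx`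
is an orthogonal decomposition, and `‖P(1 - Q)‖ = ‖(1 - Q)P‖` by taking adjoints.
-/

open Metric ContinuousLinearMap

namespace Submodule

variable {𝕜 H : Type*} [RCLike 𝕜] [NormedAddCommGroup H] [InnerProductSpace 𝕜 H]
variable (U K : Submodule 𝕜 H) [U.HasOrthogonalProjection] [K.HasOrthogonalProjection]

theorem norm_sub_starProjection_le_norm_sub (x : H) {y : H} (hy : y ∈ K) :
    ‖x - K.starProjection x‖ ≤ ‖x - y‖ :=
  (starProjection_minimal x).trans_le <|
    ciInf_le ⟨0, Set.forall_mem_range.2 fun _ ↦ norm_nonneg _⟩ (⟨y, hy⟩ : K)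

theorem starProjection_mem_inter_closedBall {r : ℝ} {x : H} (hx : ‖x‖ ≤ r) :
    K.starProjection x ∈ (K : Set H) ∩ closedBall 0 r :=
  ⟨K.starProjection_apply_mem x,
    mem_closedBall_zero_iff.2 <| (K.norm_starProjection_apply_le x).trans hx⟩

theorem infDist_inter_closedBall {r : ℝ} {x : H} (hx : ‖x‖ ≤ r) :
    infDist x ((K : Set H) ∩ closedBall 0 r) = ‖Kᗮ.starProjection x‖ := by
  have hP := K.starProjection_mem_inter_closedBall hx
  rw [starProjection_orthogonal_val]
  refine le_antisymm ((infDist_le_dist_of_mem hP).trans_eq (dist_eq_norm _ _)) ?_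
  refine (le_infDist ⟨_, hP⟩).2 fun y hy ↦ ?_
  rw [dist_eq_norm]
  exact K.norm_sub_starProjection_le_norm_sub x hy.1

theorem infDist_inter_closedBall_le {x : H} (hx : x ∈ (U : Set H) ∩ closedBall 0 1) :
    infDist x ((K : Set H) ∩ closedBall 0 1) ≤ ‖Kᗮ.starProjection ∘L U.starProjection‖ := by
  have hx1 : ‖x‖ ≤ 1 := mem_closedBall_zero_iff.1 hx.2
  rw [K.infDist_inter_closedBall hx1, ← starProjection_eq_self_iff.2 hx.1]
  exact (le_opNorm (Kᗮ.starProjection ∘L U.starProjection) x).trans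
    (mul_le_of_le_one_right (norm_nonneg _) hx1)

theorem norm_starProjection_orthogonal_comp_le_hausdorffDist :
    ‖Kᗮ.starProjection ∘L U.starProjection‖ ≤
      hausdorffDist ((U : Set H) ∩ closedBall 0 1) ((K : Set H) ∩ closedBall 0 1) := by
  have hfin : hausdorffEDist ((U : Set H) ∩ closedBall 0 1) ((K : Set H) ∩ closedBall 0 1) ≠ ⊤ :=
    hausdorffEDist_ne_top_of_nonempty_of_bounded ⟨0, U.zero_mem, by simp⟩ ⟨0, K.zero_mem, by simp⟩
      (isBounded_closedBall.subset Set.inter_subset_right)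
      (isBounded_closedBall.subset Set.inter_subset_right)
  refine opNorm_le_of_unit_norm hausdorffDist_nonneg fun x hx ↦ ?_
  have hPx : ‖U.starProjection x‖ ≤ 1 := (U.norm_starProjection_apply_le x).trans hx.le
  rw [comp_apply, ← K.infDist_inter_closedBall hPx]
  exact infDist_le_hausdorffDist_of_mem (U.starProjection_mem_inter_closedBall hx.le) hfin

theorem hausdorffDist_inter_closedBall :
    hausdorffDist ((U : Set H) ∩ closedBall 0 1) ((K : Set H) ∩ closedBall 0 1) =
      max ‖Kᗮ.starProjection ∘L U.starProjection‖ ‖Uᗮ.starProjection ∘L K.starProjection‖ := by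
  refine le_antisymm (hausdorffDist_le_of_infDist (by positivity)
    (fun x hx ↦ (infDist_inter_closedBall_le U K hx).trans (le_max_left _ _))
    (fun x hx ↦ (infDist_inter_closedBall_le K U hx).trans (le_max_right _ _))) ?_
  refine max_le (norm_starProjection_orthogonal_comp_le_hausdorffDist U K) ?_
  rw [hausdorffDist_comm]
  exact norm_starProjection_orthogonal_comp_le_hausdorffDist K U

theorem norm_starProjection_comp_starProjection_comm [CompleteSpace H] :
    ‖U.starProjection ∘L K.starProjection‖ = ‖K.starProjection ∘L U.starProjection‖ := by
  rw [← LinearIsometryEquiv.norm_map adjoint, adjoint_comp,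
    (isSelfAdjoint_starProjection U).adjoint_eq, (isSelfAdjoint_starProjection K).adjoint_eq]

theorem norm_starProjection_orthogonal_comp_le :
    ‖Kᗮ.starProjection ∘L U.starProjection‖ ≤ ‖U.starProjection - K.starProjection‖ := by
  have h : Kᗮ.starProjection ∘L U.starProjection =
      (U.starProjection - K.starProjection) ∘L U.starProjection := by
    ext x
    simpa using (starProjection_eq_self_iff.2 (U.starProjection_apply_mem x)).symm
  rw [h]
  exact (opNorm_comp_le _ _).trans (mul_le_of_le_one_right (norm_nonneg _) U.starProjection_norm_le)

theorem norm_starProjection_sub_starProjection_le [CompleteSpace H] :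
    ‖U.starProjection - K.starProjection‖ ≤
      max ‖Kᗮ.starProjection ∘L U.starProjection‖ ‖Uᗮ.starProjection ∘L K.starProjection‖ := by
  set c := max ‖Kᗮ.starProjection ∘L U.starProjection‖ ‖Uᗮ.starProjection ∘L K.starProjection‖
  refine opNorm_le_bound _ (by positivity) fun x ↦ ?_
  set a := U.starProjection (Kᗮ.starProjection x)
  set b := Uᗮ.starProjection (-K.starProjection x)
  have hdecomp : (U.starProjection - K.starProjection) x = a + b := by
    simp only [a, b, starProjection_orthogonal_val, sub_apply, map_sub, map_neg]
    abel
  have ha : ‖a‖ ≤ c * ‖Kᗮ.starProjection x‖ := calc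
    ‖a‖ = ‖(U.starProjection ∘L Kᗮ.starProjection) (Kᗮ.starProjection x)‖ := by
      rw [comp_apply, starProjection_eq_self_iff.2 (Kᗮ.starProjection_apply_mem x)]
    _ ≤ ‖U.starProjection ∘L Kᗮ.starProjection‖ * ‖Kᗮ.starProjection x‖ := le_opNorm _ _
    _ ≤ c * ‖Kᗮ.starProjection x‖ := by
      rw [norm_starProjection_comp_starProjection_comm]
      gcongr
      exact le_max_left _ _
  have hb : ‖b‖ ≤ c * ‖K.starProjection x‖ := calc
    ‖b‖ = ‖Uᗮ.starProjection (K.starProjection x)‖ := by simp only [b, map_neg, norm_neg]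
    _ = ‖(Uᗮ.starProjection ∘L K.starProjection) (K.starProjection x)‖ := by
      rw [comp_apply, starProjection_eq_self_iff.2 (K.starProjection_apply_mem x)]
    _ ≤ ‖Uᗮ.starProjection ∘L K.starProjection‖ * ‖K.starProjection x‖ := le_opNorm _ _
    _ ≤ c * ‖K.starProjection x‖ := by
      gcongr
      exact le_max_right _ _
  have horth : inner 𝕜 a b = 0 :=
    U.inner_right_of_mem_orthogonal (U.starProjection_apply_mem _) (Uᗮ.starProjection_apply_mem _)
  have hx := norm_sq_eq_add_norm_sq_starProjection x K
  refine (pow_le_pow_iff_left₀ (norm_nonneg _) (by positivity) two_ne_zero).1 ?_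
  rw [hdecomp, sq, norm_add_sq_eq_norm_sq_add_norm_sq_of_inner_eq_zero a b horth, mul_pow, hx]
  nlinarith [norm_nonneg a, norm_nonneg b]

theorem norm_starProjection_sub_starProjection [CompleteSpace H] :
    ‖U.starProjection - K.starProjection‖ =
      max ‖Kᗮ.starProjection ∘L U.starProjection‖ ‖Uᗮ.starProjection ∘L K.starProjection‖ := by
  refine le_antisymm (U.norm_starProjection_sub_starProjection_le K)
    (max_le (U.norm_starProjection_orthogonal_comp_le K) ?_)
  rw [norm_sub_rev]
  exact K.norm_starProjection_orthogonal_comp_le U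

end Submodule

theorem stmt0_general {H : Type*} [NormedAddCommGroup H] [InnerProductSpace ℝ H] [CompleteSpace H]
    (V₁ V₂ : Submodule ℝ H)
    [FiniteDimensional ℝ V₁] [FiniteDimensional ℝ V₂] :
    ‖V₁.subtypeL.comp V₁.orthogonalProjectionOnto - V₂.subtypeL.comp V₂.orthogonalProjectionOnto‖
      = Metric.hausdorffDist ((V₁ : Set H) ∩ Metric.closedBall 0 1)
        ((V₂ : Set H) ∩ Metric.closedBall 0 1) :=
  (V₁.norm_starProjection_sub_starProjection V₂).trans (V₁.hausdorffDist_inter_closedBall V₂).symm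

/-- Lemma 2.1(1): for two `m`-dimensional subspaces of a real Hilbert space, the operator
norm of the difference of the orthogonal projections equals the Hausdorff distance between
the intersections of the subspaces with the closed unit ball. -/
theorem stmt0 {H : Type*} [NormedAddCommGroup H] [InnerProductSpace ℝ H] [CompleteSpace H]
    (m : ℕ) (hm : 1 ≤ m) (V₁ V₂ : Submodule ℝ H)
    [FiniteDimensional ℝ V₁] [FiniteDimensional ℝ V₂]
    (h₁ : Module.finrank ℝ V₁ = m) (h₂ : Module.finrank ℝ V₂ = m) :
    ‖V₁.subtypeL.comp V₁.orthogonalProjectionOnto - V₂.subtypeL.comp V₂.orthogonalProjectionOnto‖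
      = Metric.hausdorffDist ((V₁ : Set H) ∩ Metric.closedBall 0 1)
        ((V₂ : Set H) ∩ Metric.closedBall 0 1) :=
  stmt0_general V₁ V₂
end

section
/- For a, b ≥ 0 and 0 < δ ≤ 1: (1 + ab)^{1/2} − 1 ≤ (1/2)δ⁻²b² + δ((1 + a²)^{1/2} − 1). -/
set_option maxHeartbeats 2000000 in
/-- Lemma 3.1, inequality (3.4): for `a, b ≥ 0` and `0 < δ ≤ 1`,
`√(1 + ab) − 1 ≤ (1/2)δ⁻²b² + δ(√(1 + a²) − 1)`. -/
theorem stmt7 (a b δ : ℝ) (ha : 0 ≤ a) (hb : 0 ≤ b) (hδ0 : 0 < δ) (hδ1 : δ ≤ 1) :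
    Real.sqrt (1 + a * b) - 1
      ≤ (1 / 2) * δ⁻¹ ^ 2 * b ^ 2 + δ * (Real.sqrt (1 + a ^ 2) - 1) := by
  have hδi : 0 < δ⁻¹ := inv_pos.mpr hδ0
  have hδδ : δ * δ⁻¹ = 1 := mul_inv_cancel₀ hδ0.ne'
  set u := Real.sqrt (1 + δ ^ 2 * a ^ 2) with hu
  set s := Real.sqrt (1 + a ^ 2) with hs
  set v := Real.sqrt (1 + δ⁻¹ ^ 2 * b ^ 2) with hv
  have hu0 : 0 ≤ u := Real.sqrt_nonneg _
  have hs0 : 0 ≤ s := Real.sqrt_nonneg _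
  have hv0 : 0 ≤ v := Real.sqrt_nonneg _
  have hu2 : u ^ 2 = 1 + δ ^ 2 * a ^ 2 := Real.sq_sqrt (by positivity)
  have hs2 : s ^ 2 = 1 + a ^ 2 := Real.sq_sqrt (by positivity)
  have hv2 : v ^ 2 = 1 + δ⁻¹ ^ 2 * b ^ 2 := Real.sq_sqrt (by positivity)
  have hu1 : 1 ≤ u := by nlinarith [sq_nonneg (u - 1), sq_nonneg (δ * a)]
  have hs1 : 1 ≤ s := by nlinarith [sq_nonneg (s - 1)]
  -- δ s ≤ u
  have hδs : δ * s ≤ u := by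
    have h : (δ * s) ^ 2 ≤ u ^ 2 := by nlinarith [sq_nonneg a, sq_nonneg δ]
    nlinarith [mul_nonneg hδ0.le hs0]
  set w := Real.sqrt (1 + a * b) with hw
  have hw0 : 0 ≤ w := Real.sqrt_nonneg _
  have hw2 : w ^ 2 = 1 + a * b := Real.sq_sqrt (by positivity)
  -- Step A : w ≤ (u+v)/2
  have huv : w ^ 2 ≤ u * v := by
    have h1 : (w ^ 2) ^ 2 ≤ (u * v) ^ 2 := by
      have key : 2 * (a * b) ≤ δ ^ 2 * a ^ 2 + δ⁻¹ ^ 2 * b ^ 2 := by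
        nlinarith [sq_nonneg (δ * a - δ⁻¹ * b)]
      have hdd : δ ^ 2 * δ⁻¹ ^ 2 = 1 := by rw [← mul_pow, hδδ]; norm_num
      have expand : (1 + δ ^ 2 * a ^ 2) * (1 + δ⁻¹ ^ 2 * b ^ 2)
          = 1 + δ ^ 2 * a ^ 2 + δ⁻¹ ^ 2 * b ^ 2 + a ^ 2 * b ^ 2 := by
        linear_combination (a ^ 2 * b ^ 2) * hdd
      have e : (u * v) ^ 2 = u ^ 2 * v ^ 2 := by ring
      rw [hw2, e, hu2, hv2, expand]
      nlinarith [key]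
    have h2 : 0 ≤ u * v := mul_nonneg hu0 hv0
    nlinarith [sq_nonneg (w ^ 2 - u * v), sq_nonneg (w ^ 2 + u * v)]
  have hA : w ≤ (u + v) / 2 := by
    nlinarith [sq_nonneg (u - v), hw0, huv]
  -- Step B : u - 1 ≤ 2δ(s-1)
  have hB : u - 1 ≤ 2 * δ * (s - 1) := by
    nlinarith [mul_nonneg hδ0.le hs0, sq_nonneg a, mul_nonneg (mul_nonneg hδ0.le hδ0.le) (sq_nonneg a)]
  -- Step C : v ≤ 1 + δ⁻¹^2 b^2 / 2
  have hC : v ≤ 1 + δ⁻¹ ^ 2 * b ^ 2 / 2 := by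
    nlinarith [sq_nonneg (v - (1 + δ⁻¹ ^ 2 * b ^ 2 / 2)), sq_nonneg (δ⁻¹ * b), sq_nonneg (δ⁻¹ ^ 2 * b ^ 2)]
  nlinarith [hA, hB, hC, mul_nonneg (sq_nonneg δ⁻¹) (sq_nonneg b)]
end

section
/- Let μ be a finite measure on a set E and f ∈ L^∞(E,μ) a positive function. Then min{(∫_E f dμ)², (∫_E 1 dμ)²} ≤ 3 (∫_E 1 dμ) · (∫_E ((1 + f²)^{1/2} − 1) dμ). -/
/-!
With `g = √(1 + f²) - 1 ≥ 0` one has `f² = g (g + 2)`, so Cauchy–Schwarz gives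
`(∫ f)² ≤ I (I + 2M)`, where `I = ∫ g` and `M = μ E`. If `I ≤ M` this is at most `3MI`;
otherwise `M² ≤ MI ≤ 3MI`.
-/

open MeasureTheory

theorem one_le_sqrt_one_add_sq (x : ℝ) : 1 ≤ √(1 + x ^ 2) :=
  Real.one_le_sqrt.2 (le_add_of_nonneg_right (sq_nonneg x))

theorem sq_eq_sqrt_one_add_sq_sub_one_mul (x : ℝ) :
    x ^ 2 = (√(1 + x ^ 2) - 1) * (√(1 + x ^ 2) - 1 + 2) := by
  have := Real.sq_sqrt (by positivity : (0 : ℝ) ≤ 1 + x ^ 2)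
  linear_combination -this

theorem sqrt_one_add_sq_sub_one_le_abs (x : ℝ) : √(1 + x ^ 2) - 1 ≤ |x| := by
  have : √(1 + x ^ 2) ≤ 1 + |x| :=
    Real.sqrt_le_iff.2 ⟨by positivity, by nlinarith [sq_abs x, abs_nonneg x]⟩
  linarith

theorem min_sq_le_three_mul_of_sq_le {a I M : ℝ} (hI : 0 ≤ I) (hM : 0 ≤ M)
    (ha : a ^ 2 ≤ I * (I + 2 * M)) : min (a ^ 2) (M ^ 2) ≤ 3 * M * I := by
  rcases le_total I M with hIM | hMI
  · exact (min_le_left _ _).trans (by nlinarith)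
  · exact (min_le_right _ _).trans (by nlinarith)

section Integral

variable {α : Type*} [MeasurableSpace α] {μ : Measure α}

theorem memLp_two_sqrt {g : α → ℝ} (hg : Integrable g μ) (hg0 : 0 ≤ᵐ[μ] g) :
    MemLp (fun x => √(g x)) 2 μ := by
  refine (memLp_two_iff_integrable_sq hg.aemeasurable.sqrt.aestronglyMeasurable).2 (hg.congr ?_)
  filter_upwards [hg0] with x hx using (Real.sq_sqrt hx).symm

theorem integral_sqrt_mul_sqrt_le {g h : α → ℝ} (hg : Integrable g μ) (hh : Integrable h μ)
    (hg0 : 0 ≤ᵐ[μ] g) (hh0 : 0 ≤ᵐ[μ] h) :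
    ∫ x, √(g x) * √(h x) ∂μ ≤ √(∫ x, g x ∂μ) * √(∫ x, h x ∂μ) := by
  have key := integral_mul_le_Lp_mul_Lq_of_nonneg Real.HolderConjugate.two_two
    (ae_of_all μ fun x => Real.sqrt_nonneg (g x))
    (ae_of_all μ fun x => Real.sqrt_nonneg (h x))
    (by simpa using memLp_two_sqrt hg hg0) (by simpa using memLp_two_sqrt hh hh0)
  have hsq {k : α → ℝ} (hk0 : 0 ≤ᵐ[μ] k) :
      ∫ x, √(k x) ^ (2 : ℝ) ∂μ = ∫ x, k x ∂μ := by
    refine integral_congr_ae ?_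
    filter_upwards [hk0] with x hx
    rw [Real.rpow_two, Real.sq_sqrt hx]
  rwa [hsq hg0, hsq hh0, ← Real.sqrt_eq_rpow, ← Real.sqrt_eq_rpow] at key

theorem sq_integral_le_integral_mul_integral {f g h : α → ℝ} (hg : Integrable g μ)
    (hh : Integrable h μ) (hg0 : 0 ≤ᵐ[μ] g) (hh0 : 0 ≤ᵐ[μ] h)
    (hfgh : ∀ᵐ x ∂μ, f x ^ 2 ≤ g x * h x) :
    (∫ x, f x ∂μ) ^ 2 ≤ (∫ x, g x ∂μ) * ∫ x, h x ∂μ := by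
  have habs : ∫ x, |f x| ∂μ ≤ ∫ x, √(g x) * √(h x) ∂μ := by
    refine integral_mono_of_nonneg (ae_of_all μ fun x => abs_nonneg (f x))
      ((memLp_two_sqrt hg hg0).integrable_mul (memLp_two_sqrt hh hh0)) ?_
    filter_upwards [hg0, hfgh] with x hx hx'
    rw [← Real.sqrt_mul hx, ← Real.sqrt_sq_eq_abs]
    exact Real.sqrt_le_sqrt hx'
  calc (∫ x, f x ∂μ) ^ 2 = |∫ x, f x ∂μ| ^ 2 := (sq_abs _).symm
    _ ≤ (∫ x, |f x| ∂μ) ^ 2 := by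
        gcongr
        exact abs_integral_le_integral_abs
    _ ≤ (√(∫ x, g x ∂μ) * √(∫ x, h x ∂μ)) ^ 2 := by
        gcongr
        exact habs.trans (integral_sqrt_mul_sqrt_le hg hh hg0 hh0)
    _ = (∫ x, g x ∂μ) * ∫ x, h x ∂μ := by
        rw [mul_pow, Real.sq_sqrt (integral_nonneg_of_ae hg0),
          Real.sq_sqrt (integral_nonneg_of_ae hh0)]

theorem MeasureTheory.Integrable.sqrt_one_add_sq_sub_one {f : α → ℝ} (hf : Integrable f μ) :
    Integrable (fun x => √(1 + f x ^ 2) - 1) μ := by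
  have hmeas := ((hf.aemeasurable.pow_const 2).const_add 1).sqrt.sub_const 1
  refine hf.mono hmeas.aestronglyMeasurable (ae_of_all μ fun x => ?_)
  rw [Real.norm_of_nonneg (sub_nonneg.2 (one_le_sqrt_one_add_sq (f x))), Real.norm_eq_abs]
  exact sqrt_one_add_sq_sub_one_le_abs (f x)

end Integral

theorem stmt8_general {E : Type*} [MeasurableSpace E] (μ : Measure E) [IsFiniteMeasure μ]
    (f : E → ℝ) (hbd : MemLp f ⊤ μ) :
    min ((∫ x, f x ∂μ) ^ 2) ((∫ x, (1 : ℝ) ∂μ) ^ 2)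
      ≤ 3 * (∫ x, (1 : ℝ) ∂μ) * ∫ x, (Real.sqrt (1 + f x ^ 2) - 1) ∂μ := by
  set g : E → ℝ := fun x => √(1 + f x ^ 2) - 1
  have hg0 (x : E) : 0 ≤ g x := sub_nonneg.2 (one_le_sqrt_one_add_sq (f x))
  have hg : Integrable g μ := (hbd.integrable le_top).sqrt_one_add_sq_sub_one
  have hCS : (∫ x, f x ∂μ) ^ 2 ≤ (∫ x, g x ∂μ) * ∫ x, (g x + 2) ∂μ :=
    sq_integral_le_integral_mul_integral hg (hg.add (integrable_const 2)) (ae_of_all μ hg0)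
      (ae_of_all μ fun x => add_nonneg (hg0 x) zero_le_two)
      (ae_of_all μ fun x => (sq_eq_sqrt_one_add_sq_sub_one_mul (f x)).le)
  rw [integral_add hg (integrable_const 2), integral_const, smul_eq_mul] at hCS
  rw [integral_const, smul_eq_mul, mul_one]
  exact min_sq_le_three_mul_of_sq_le (integral_nonneg hg0) measureReal_nonneg (by linarith)

/-- Lemma 3.4: for a finite measure `μ` and a positive essentially bounded function `f`,
`min{(∫ f)², (∫ 1)²} ≤ 3 (∫ 1) ∫ (√(1 + f²) − 1)`. -/
theorem stmt8 {E : Type*} [MeasurableSpace E] (μ : Measure E) [IsFiniteMeasure μ]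
    (f : E → ℝ) (hf : Measurable f) (hfpos : ∀ x, 0 < f x) (hbd : MemLp f ⊤ μ) :
    min ((∫ x, f x ∂μ) ^ 2) ((∫ x, (1 : ℝ) ∂μ) ^ 2)
      ≤ 3 * (∫ x, (1 : ℝ) ∂μ) * ∫ x, (Real.sqrt (1 + f x ^ 2) - 1) ∂μ :=
  stmt8_general μ f hbd
end

section
/- Let p and q be harmonic polynomials on ℝ^m, homogeneous of degree k. Then ∫_{S^{m-1}} ∇p · ∇q dH^{m-1} = k(m + 2k − 2) ∫_{S^{m-1}} p q dH^{m-1}. -/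
/-!
With the angular momentum operators `L i j = xᵢ ∂ⱼ - xⱼ ∂ᵢ` and the Euler operator `E = ∑ xᵢ ∂ᵢ`
one has `∑ᵢⱼ L i j ∘ L i j = 2 (|x|² Δ - E² - (m - 2) E)`, so for `f` homogeneous of degree `d`
the double sum applied to `f` is `2 (|x|² Δf - d (d + m - 2) f)`. Each `L i j g` is the derivative
at `t = 0` of `g` composed with the rotation by `t` in the `(i, j)`-plane; these rotations preserve
the surface measure, so `∫_S L i j g = 0`, and therefore `∫_S Δf = d (d + m - 2) ∫_S f`.
For harmonic `p`, `q` we have `Δ(p q) = 2 ∇p · ∇q`, and `p q` is homogeneous of degree `2k`.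
All integrals are finite because `S^{m-1}` is covered by finitely many Lipschitz images of faces
of the cube, so it has finite `(m-1)`-dimensional Hausdorff measure.
-/

open MeasureTheory Metric MvPolynomial Finset Real
open scoped NNReal

namespace MvPolynomial

variable {σ R : Type*} [CommRing R]

theorem pderiv_pderiv_comm (i j : σ) (p : MvPolynomial σ R) :
    pderiv i (pderiv j p) = pderiv j (pderiv i p) := by
  classical
  have : ⁅pderiv i, pderiv j⁆ = (0 : Derivation R (MvPolynomial σ R) (MvPolynomial σ R)) :=
    derivation_ext fun l => by
      rw [Derivation.commutator_apply]
      simp [pderiv_X, Pi.single_apply, apply_ite]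
  have h := congr($this p)
  rw [Derivation.commutator_apply] at h
  simpa [sub_eq_zero] using h

theorem pderiv_X_mul [DecidableEq σ] (i j : σ) (p : MvPolynomial σ R) :
    pderiv i (X j * p) = (if i = j then p else 0) + X j * pderiv i p := by
  rw [pderiv_mul, pderiv_X]
  by_cases h : i = j
  · subst h; simp
  · simp [h, Ne.symm h]

noncomputable def angularMomentum (i j : σ) (p : MvPolynomial σ R) : MvPolynomial σ R :=
  X i * pderiv j p - X j * pderiv i p

theorem angularMomentum_angularMomentum [DecidableEq σ] (i j : σ) (p : MvPolynomial σ R) :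
    angularMomentum i j (angularMomentum i j p) =
      X i ^ 2 * pderiv j (pderiv j p) + X j ^ 2 * pderiv i (pderiv i p)
        - X i * pderiv i p - X j * pderiv j p - 2 * (X i * X j * pderiv i (pderiv j p))
        + if i = j then 2 * (X i * pderiv i p) else 0 := by
  by_cases hij : i = j
  · subst hij; simp [angularMomentum]; ring
  · simp only [angularMomentum, map_sub, pderiv_X_mul, if_neg hij, if_neg (Ne.symm hij), if_pos,
      pderiv_pderiv_comm j i]
    ring

variable [Fintype σ]

noncomputable def euler (p : MvPolynomial σ R) : MvPolynomial σ R :=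
  ∑ i, X i * pderiv i p

noncomputable def laplacian (p : MvPolynomial σ R) : MvPolynomial σ R :=
  ∑ i, pderiv i (pderiv i p)

theorem euler_nsmul (n : ℕ) (p : MvPolynomial σ R) : euler (n • p) = n • euler p := by
  simp [euler, smul_sum, nsmul_eq_mul, mul_left_comm]

theorem euler_euler [DecidableEq σ] (p : MvPolynomial σ R) :
    euler (euler p) = euler p + ∑ i, ∑ j, X i * X j * pderiv i (pderiv j p) := by
  simp only [euler, map_sum, pderiv_X_mul, mul_sum, mul_add, sum_add_distrib,
    sum_ite_eq, mem_univ, if_true, mul_assoc]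

theorem laplacian_mul (p q : MvPolynomial σ R) :
    laplacian (p * q) = laplacian p * q + 2 * ∑ i, pderiv i p * pderiv i q + p * laplacian q := by
  simp only [laplacian, pderiv_mul, map_add, sum_add_distrib, ← sum_mul, ← mul_sum]
  ring

theorem IsHomogeneous.euler_eq {p : MvPolynomial σ R} {n : ℕ} (hp : p.IsHomogeneous n) :
    euler p = n • p := by
  rw [euler]
  conv_lhs => rw [p.as_sum]
  conv_rhs => rw [p.as_sum, smul_sum]
  simp only [map_sum, mul_sum, X_mul_pderiv_monomial]
  rw [sum_comm]
  refine sum_congr rfl fun s hs => ?_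
  rw [← sum_smul, ← Finsupp.degree_eq_sum, Finsupp.degree_eq_weight_one]
  exact congrArg (· • _) (hp (mem_support_iff.mp hs))

theorem sum_angularMomentum_angularMomentum (p : MvPolynomial σ R) :
    ∑ i, ∑ j, angularMomentum i j (angularMomentum i j p) =
      2 * ((∑ i, X i ^ 2) * laplacian p - euler (euler p)
        - ((Fintype.card σ : MvPolynomial σ R) - 2) * euler p) := by
  classical
  rw [euler_euler]
  simp only [angularMomentum_angularMomentum, sum_add_distrib, sum_sub_distrib, sum_ite_eq,
    mem_univ, if_true, sum_const, card_univ, nsmul_eq_mul]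
  simp only [← mul_sum, ← sum_mul, laplacian, euler]
  ring

theorem IsHomogeneous.sum_angularMomentum_angularMomentum {p : MvPolynomial σ R} {n : ℕ}
    (hp : p.IsHomogeneous n) :
    ∑ i, ∑ j, angularMomentum i j (angularMomentum i j p) =
      2 * ((∑ i, X i ^ 2) * laplacian p - (n * (n + Fintype.card σ - 2) : ℤ) • p) := by
  rw [MvPolynomial.sum_angularMomentum_angularMomentum, hp.euler_eq, euler_nsmul, hp.euler_eq]
  simp only [nsmul_eq_mul, zsmul_eq_mul]
  push_cast
  ring

theorem hasDerivAt_eval {𝕜 ι : Type*} [NontriviallyNormedField 𝕜] [Fintype ι]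
    (p : MvPolynomial ι 𝕜) {c : 𝕜 → ι → 𝕜} {c' : ι → 𝕜} {t : 𝕜}
    (hc : ∀ l, HasDerivAt (fun s => c s l) (c' l) t) :
    HasDerivAt (fun s => eval (c s) p) (∑ l, eval (c t) (pderiv l p) * c' l) t := by
  classical
  induction p using MvPolynomial.induction_on with
  | C a => simpa using hasDerivAt_const t a
  | add p q hp hq =>
    simp only [map_add, add_mul, sum_add_distrib]
    exact hp.add hq
  | mul_X p l hp =>
    simp only [map_mul, eval_X]
    refine (hp.mul (hc l)).congr_deriv ?_
    simp only [pderiv_mul, pderiv_X, Pi.single_apply, map_add, map_mul, eval_X,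
      apply_ite (eval _), map_zero, mul_ite, mul_one, mul_zero, add_mul, ite_mul, zero_mul,
      sum_add_distrib, sum_ite_eq, mem_univ, if_true, sum_mul]
    simp only [mul_right_comm]

end MvPolynomial

theorem lipschitzOnWith_inv_norm_smul {E : Type*} [NormedAddCommGroup E] [NormedSpace ℝ E] :
    LipschitzOnWith 2 (fun x : E => ‖x‖⁻¹ • x) {x | 1 ≤ ‖x‖} := by
  refine LipschitzOnWith.of_dist_le_mul fun x hx y hy => ?_
  simp only [Set.mem_ofPred_eq] at hx hy
  have hx0 : 0 < ‖x‖ := by linarith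
  have hy0 : 0 < ‖y‖ := by linarith
  rw [dist_eq_norm, dist_eq_norm, NNReal.coe_ofNat]
  calc ‖‖x‖⁻¹ • x - ‖y‖⁻¹ • y‖ = ‖‖x‖⁻¹ • (x - y) + (‖x‖⁻¹ - ‖y‖⁻¹) • y‖ := by
        rw [smul_sub, sub_smul, sub_add_sub_cancel]
    _ ≤ ‖x‖⁻¹ * ‖x - y‖ + |‖x‖⁻¹ - ‖y‖⁻¹| * ‖y‖ := by
        refine (norm_add_le _ _).trans_eq ?_
        rw [norm_smul, norm_smul, norm_inv, norm_norm, Real.norm_eq_abs]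
    _ = (‖x - y‖ + |‖x‖ - ‖y‖|) / ‖x‖ := by
        rw [inv_sub_inv hx0.ne' hy0.ne', abs_div, abs_of_pos (mul_pos hx0 hy0), abs_sub_comm]
        field_simp
    _ ≤ 2 * ‖x - y‖ := by
        rw [div_le_iff₀ hx0]
        nlinarith [abs_norm_sub_norm_le x y, norm_nonneg (x - y)]

section CubeFaces

variable {n : ℕ}

noncomputable def cubeFaceToSphere (i : Fin (n + 1)) (c : ℝ) (y : Fin n → ℝ) :
    EuclideanSpace ℝ (Fin (n + 1)) :=
  ‖WithLp.toLp 2 (Fin.insertNth (α := fun _ => ℝ) i c y)‖⁻¹ •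
    WithLp.toLp 2 (Fin.insertNth (α := fun _ => ℝ) i c y)

theorem lipschitzWith_cubeFaceToSphere (i : Fin (n + 1)) {c : ℝ} (hc : |c| = 1) :
    LipschitzWith (2 * (n + 1 : ℝ≥0) ^ (2⁻¹ : ℝ)) (cubeFaceToSphere i c) := by
  have hinsert : Isometry (Fin.insertNth (α := fun _ => ℝ) i c) :=
    Isometry.of_dist_eq fun y z => by simp [Fin.dist_insertNth_insertNth]
  have hmaps : Set.MapsTo (fun y => WithLp.toLp 2 (Fin.insertNth (α := fun _ => ℝ) i c y))
      Set.univ {x : EuclideanSpace ℝ (Fin (n + 1)) | 1 ≤ ‖x‖} := fun y _ => by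
    simpa [hc] using PiLp.norm_apply_le (WithLp.toLp 2 (Fin.insertNth (α := fun _ => ℝ) i c y)) i
  have h := lipschitzOnWith_inv_norm_smul.comp
    (((PiLp.lipschitzWith_toLp 2 _).comp hinsert.lipschitz).lipschitzOnWith) hmaps
  rw [lipschitzOnWith_univ] at h
  -- the two emetric instances on `EuclideanSpace` agree only up to unfolding
  convert h using 1 <;> first | rfl | simp

theorem sphere_subset_iUnion_cubeFaceToSphere :
    sphere (0 : EuclideanSpace ℝ (Fin (n + 1))) 1 ⊆
      ⋃ i, ⋃ c ∈ ({-1, 1} : Set ℝ), cubeFaceToSphere i c '' closedBall 0 1 := by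
  intro x hx
  rw [mem_sphere_zero_iff_norm] at hx
  obtain ⟨i, hi⟩ := Finite.exists_max fun l => |x l|
  have hxi : 0 < |x i| := by
    by_contra! h
    have : x = 0 := by ext l; simpa using (hi l).trans h
    simp [this] at hx
  set v : Fin (n + 1) → ℝ := fun l => x l / |x i|
  have hv : WithLp.toLp 2 v = |x i|⁻¹ • x := by ext l; simp [v, div_eq_inv_mul]
  simp only [Set.mem_iUnion]
  refine ⟨i, v i, ?_, Fin.removeNth i v, ?_, ?_⟩
  · rcases abs_choice (x i) with h | h <;> simp [v, h, abs_pos.mp hxi]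
  · rw [mem_closedBall_zero_iff, pi_norm_le_iff_of_nonneg zero_le_one]
    intro l
    simpa [v, Fin.removeNth, abs_div, div_le_one hxi] using hi _
  · rw [cubeFaceToSphere, Fin.insertNth_self_removeNth, hv, norm_smul, hx]
    simp [smul_smul, hxi.ne']

theorem hausdorffMeasure_sphere_lt_top (m : ℕ) :
    μH[(m : ℝ) - 1] (sphere (0 : EuclideanSpace ℝ (Fin m)) 1) < ⊤ := by
  cases m with
  | zero => simp [sphere_eq_empty_of_subsingleton]
  | succ n =>
    have hd : ((n + 1 : ℕ) : ℝ) - 1 = n := by push_cast; ring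
    have hface (i : Fin (n + 1)) {c : ℝ} (hc : |c| = 1) :
        μH[(n : ℝ)] (cubeFaceToSphere i c '' closedBall 0 1) < ⊤ := by
      refine ((lipschitzWith_cubeFaceToSphere i hc).hausdorffMeasure_image_le n.cast_nonneg
        _).trans_lt (ENNReal.mul_lt_top
        (ENNReal.rpow_lt_top_of_nonneg n.cast_nonneg ENNReal.coe_ne_top) ?_)
      have := hausdorffMeasure_pi_real (ι := Fin n)
      rw [Fintype.card_fin] at this
      rw [this]
      exact measure_closedBall_lt_top
    rw [hd]
    refine (measure_mono sphere_subset_iUnion_cubeFaceToSphere).trans_lt ?_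
    refine (measure_iUnion_fintype_le _ _).trans_lt (ENNReal.sum_lt_top.mpr fun i _ =>
      measure_biUnion_lt_top (Set.toFinite _) fun c hc => hface i ?_)
    rcases hc with rfl | rfl <;> simp

end CubeFaces

section PlaneRotation

variable {ι : Type*} [DecidableEq ι]

noncomputable def planeRotation (i j : ι) (t : ℝ) (x : ι → ℝ) : ι → ℝ := fun l =>
  if l = i then cos t * x i - sin t * x j else if l = j then sin t * x i + cos t * x j else x l

variable {i j : ι}

@[simp]
theorem planeRotation_zero (i j : ι) (x : ι → ℝ) : planeRotation i j 0 x = x := by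
  ext l; simp only [planeRotation]; split_ifs <;> subst_vars <;> simp

theorem planeRotation_neg_planeRotation (hij : i ≠ j) (t : ℝ) (x : ι → ℝ) :
    planeRotation i j (-t) (planeRotation i j t x) = x := by
  ext l
  by_cases hi : l = i
  · subst hi; simp [planeRotation, Ne.symm hij]; linear_combination x l * sin_sq_add_cos_sq t
  by_cases hj : l = j
  · subst hj; simp [planeRotation, Ne.symm hij]; linear_combination x l * sin_sq_add_cos_sq t
  simp [planeRotation, hi, hj]

theorem planeRotation_sub (i j : ι) (t : ℝ) (x y : ι → ℝ) :
    planeRotation i j t x - planeRotation i j t y = planeRotation i j t (x - y) := by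
  ext l; simp only [planeRotation, Pi.sub_apply]; split_ifs <;> ring

theorem sum_sq_planeRotation [Fintype ι] (hij : i ≠ j) (t : ℝ) (x : ι → ℝ) :
    ∑ l, planeRotation i j t x l ^ 2 = ∑ l, x l ^ 2 := by
  have hj : j ∈ univ.erase i := mem_erase.mpr ⟨Ne.symm hij, mem_univ j⟩
  rw [← add_sum_erase _ _ (mem_univ i), ← add_sum_erase _ _ hj, ← add_sum_erase _ _ (mem_univ i),
    ← add_sum_erase _ _ hj]
  have hrest : ∑ l ∈ (univ.erase i).erase j, planeRotation i j t x l ^ 2 =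
      ∑ l ∈ (univ.erase i).erase j, x l ^ 2 :=
    sum_congr rfl fun l hl => by
      simp only [mem_erase] at hl; simp [planeRotation, hl.1, hl.2.1]
  have hRi : planeRotation i j t x i = cos t * x i - sin t * x j := if_pos rfl
  have hRj : planeRotation i j t x j = sin t * x i + cos t * x j := by
    simp [planeRotation, Ne.symm hij]
  rw [hrest, hRi, hRj]
  linear_combination (x i ^ 2 + x j ^ 2) * sin_sq_add_cos_sq t

theorem hasDerivAt_planeRotation (hij : i ≠ j) (x : ι → ℝ) (t : ℝ) (l : ι) :
    HasDerivAt (fun s => planeRotation i j s x l)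
      ((if l = j then planeRotation i j t x i else 0) -
        (if l = i then planeRotation i j t x j else 0)) t := by
  by_cases hi : l = i
  · subst hi
    simp only [planeRotation, if_neg hij, if_neg (Ne.symm hij), if_true]
    refine (((hasDerivAt_cos t).mul_const (x l)).sub
      ((hasDerivAt_sin t).mul_const (x j))).congr_deriv ?_
    ring
  by_cases hj : l = j
  · subst hj
    simp only [planeRotation, if_neg hi, if_true]
    refine (((hasDerivAt_sin t).mul_const (x i)).add
      ((hasDerivAt_cos t).mul_const (x l))).congr_deriv ?_
    ring
  simpa [planeRotation, hi, hj] using hasDerivAt_const t (x l)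

theorem norm_toLp_planeRotation [Fintype ι] (hij : i ≠ j) (t : ℝ) (x : ι → ℝ) :
    ‖(WithLp.toLp 2 (planeRotation i j t x) : EuclideanSpace ℝ ι)‖ =
      ‖(WithLp.toLp 2 x : EuclideanSpace ℝ ι)‖ := by
  simp [EuclideanSpace.norm_eq, sum_sq_planeRotation hij]

noncomputable def planeRotationIsometry [Fintype ι] (hij : i ≠ j) (t : ℝ) :
    EuclideanSpace ℝ ι ≃ᵢ EuclideanSpace ℝ ι where
  toFun x := WithLp.toLp 2 (planeRotation i j t x)
  invFun x := WithLp.toLp 2 (planeRotation i j (-t) x)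
  left_inv x := by simp [planeRotation_neg_planeRotation hij]
  right_inv x := by
    simpa using congrArg (WithLp.toLp 2) (planeRotation_neg_planeRotation hij (-t) x)
  isometry_toFun := Isometry.of_dist_eq fun x y => by
    rw [dist_eq_norm, dist_eq_norm, ← WithLp.toLp_sub, planeRotation_sub,
      norm_toLp_planeRotation hij]
    rfl

@[simp]
theorem planeRotationIsometry_apply [Fintype ι] (hij : i ≠ j) (t : ℝ) (x : EuclideanSpace ℝ ι) :
    planeRotationIsometry hij t x = WithLp.toLp 2 (planeRotation i j t x.ofLp) :=
  rfl

theorem norm_planeRotationIsometry [Fintype ι] (hij : i ≠ j) (t : ℝ) (x : EuclideanSpace ℝ ι) :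
    ‖planeRotationIsometry hij t x‖ = ‖x‖ :=
  norm_toLp_planeRotation hij t x.ofLp

theorem hasDerivAt_eval_planeRotation [Fintype ι] (hij : i ≠ j) (p : MvPolynomial ι ℝ)
    (x : ι → ℝ) (t : ℝ) :
    HasDerivAt (fun s => eval (planeRotation i j s x) p)
      (eval (planeRotation i j t x) (angularMomentum i j p)) t := by
  refine (p.hasDerivAt_eval (hasDerivAt_planeRotation hij x t)).congr_deriv ?_
  simp only [angularMomentum, sub_mul, ite_mul, zero_mul, sum_sub_distrib, sum_ite_eq', mem_univ,
    if_true, map_sub, map_mul, eval_X, mul_comm]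

theorem measurePreserving_planeRotationIsometry [Fintype ι] (hij : i ≠ j) (t d : ℝ) :
    MeasurePreserving (planeRotationIsometry hij t) ((μH[d]).restrict (sphere 0 1))
      ((μH[d]).restrict (sphere 0 1)) := by
  have hS : planeRotationIsometry hij t ⁻¹' sphere 0 1 = sphere 0 1 := by
    ext x
    rw [Set.mem_preimage, mem_sphere_zero_iff_norm, mem_sphere_zero_iff_norm,
      norm_planeRotationIsometry]
  have h := ((planeRotationIsometry hij t).measurePreserving_hausdorffMeasure d).restrict_preimage
    (isClosed_sphere (x := 0) (ε := 1)).measurableSet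
  rwa [hS] at h

end PlaneRotation

section SphereIntegrals

variable {m : ℕ}

instance : IsFiniteMeasure
    ((μH[(m : ℝ) - 1]).restrict (sphere (0 : EuclideanSpace ℝ (Fin m)) 1)) :=
  isFiniteMeasure_restrict.mpr (hausdorffMeasure_sphere_lt_top m).ne

theorem integrable_eval_sphere (p : MvPolynomial (Fin m) ℝ) :
    Integrable (fun x : EuclideanSpace ℝ (Fin m) => eval (fun l => x l) p)
      ((μH[(m : ℝ) - 1]).restrict (sphere 0 1)) :=
  ContinuousOn.integrableOn_of_subset_isCompact
    ((continuous_eval p).comp (PiLp.continuous_ofLp 2 _)).continuousOn (isCompact_sphere 0 1)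
    isClosed_sphere.measurableSet subset_rfl (hausdorffMeasure_sphere_lt_top m).ne

theorem integral_sphere_eval_angularMomentum (p : MvPolynomial (Fin m) ℝ) (i j : Fin m) :
    ∫ x in sphere (0 : EuclideanSpace ℝ (Fin m)) 1, eval (fun l => x l) (angularMomentum i j p)
      ∂μH[(m : ℝ) - 1] = 0 := by
  rcases eq_or_ne i j with rfl | hij
  · simp [angularMomentum]
  let μ := (μH[(m : ℝ) - 1]).restrict (sphere (0 : EuclideanSpace ℝ (Fin m)) 1)
  let R := planeRotationIsometry hij
  let f (q : MvPolynomial (Fin m) ℝ) (x : EuclideanSpace ℝ (Fin m)) : ℝ := eval (fun l => x l) q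
  have hf (q) : Continuous (f q) := (continuous_eval q).comp (PiLp.continuous_ofLp 2 _)
  obtain ⟨C, hC⟩ := (isCompact_sphere (0 : EuclideanSpace ℝ (Fin m)) 1).exists_bound_of_continuousOn
    (hf (angularMomentum i j p)).continuousOn
  have hmp (t : ℝ) := measurePreserving_planeRotationIsometry hij t ((m : ℝ) - 1)
  have hconst (t : ℝ) : ∫ x, f p (R t x) ∂μ = ∫ x, f p x ∂μ :=
    (hmp t).integral_comp (R t).toHomeomorph.measurableEmbedding (f p)
  have hR (t : ℝ) {x : EuclideanSpace ℝ (Fin m)} (hx : x ∈ sphere 0 1) : R t x ∈ sphere 0 1 := by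
    rw [mem_sphere_zero_iff_norm] at hx ⊢
    rwa [norm_planeRotationIsometry]
  have hderiv := hasDerivAt_integral_of_dominated_loc_of_deriv_le (μ := μ) (x₀ := 0)
    (F := fun t x => f p (R t x)) (F' := fun t x => f (angularMomentum i j p) (R t x))
    (bound := fun _ => C) Filter.univ_mem
    (Filter.Eventually.of_forall fun t => ((hf p).comp (R t).continuous).aestronglyMeasurable)
    ((hmp 0).integrable_comp_of_integrable (integrable_eval_sphere p))
    ((hf _).comp (R 0).continuous).aestronglyMeasurable
    ((ae_restrict_mem (isClosed_sphere (x := 0) (ε := 1)).measurableSet).mono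
      fun x hx t _ => hC _ (hR t hx))
    (integrable_const C)
    (Filter.Eventually.of_forall fun x t _ => hasDerivAt_eval_planeRotation hij p _ t)
  rw [funext hconst] at hderiv
  have h0 := (hasDerivAt_const (0 : ℝ) (∫ x, f p x ∂μ)).unique hderiv.2
  simpa [R, f] using h0.symm

theorem integral_sphere_eval_laplacian {d : ℕ} {f : MvPolynomial (Fin m) ℝ}
    (hf : f.IsHomogeneous d) :
    ∫ x in sphere (0 : EuclideanSpace ℝ (Fin m)) 1, eval (fun l => x l) (laplacian f)
        ∂μH[(m : ℝ) - 1] =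
      d * (d + m - 2) * ∫ x in sphere (0 : EuclideanSpace ℝ (Fin m)) 1, eval (fun l => x l) f
        ∂μH[(m : ℝ) - 1] := by
  have hsum : ∫ x in sphere (0 : EuclideanSpace ℝ (Fin m)) 1,
      eval (fun l => x l) (∑ i, ∑ j, angularMomentum i j (angularMomentum i j f))
        ∂μH[(m : ℝ) - 1] = 0 := by
    simp only [map_sum]
    rw [integral_finsetSum _ fun i _ => integrable_finsetSum _ fun j _ => integrable_eval_sphere _]
    refine sum_eq_zero fun i _ => ?_
    rw [integral_finsetSum _ fun j _ => integrable_eval_sphere _]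
    exact sum_eq_zero fun j _ => integral_sphere_eval_angularMomentum _ i j
  have hsphere : ∀ x ∈ sphere (0 : EuclideanSpace ℝ (Fin m)) 1,
      eval (fun l => x l) (∑ i, ∑ j, angularMomentum i j (angularMomentum i j f)) =
        2 * (eval (fun l => x l) (laplacian f) - d * (d + m - 2) * eval (fun l => x l) f) := by
    intro x hx
    have hx2 : ∑ l, x l ^ 2 = 1 := by
      rw [← EuclideanSpace.real_norm_sq_eq, mem_sphere_zero_iff_norm.mp hx, one_pow]
    simp [hf.sum_angularMomentum_angularMomentum, hx2]
  rw [setIntegral_congr_fun (isClosed_sphere (x := 0) (ε := 1)).measurableSet hsphere,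
    integral_const_mul, integral_sub (integrable_eval_sphere _)
      ((integrable_eval_sphere _).const_mul _), integral_const_mul] at hsum
  linear_combination hsum / 2

end SphereIntegrals

theorem stmt11_general (m k : ℕ)
    (P Q : MvPolynomial (Fin m) ℝ)
    (hPhom : P.IsHomogeneous k) (hQhom : Q.IsHomogeneous k)
    (hPharm : ∑ i : Fin m, pderiv i (pderiv i P) = 0)
    (hQharm : ∑ i : Fin m, pderiv i (pderiv i Q) = 0) :
    (∫ x in sphere (0 : EuclideanSpace ℝ (Fin m)) 1,
        ∑ i : Fin m,
          eval (fun j => x j) (pderiv i P) * eval (fun j => x j) (pderiv i Q)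
        ∂(Measure.hausdorffMeasure ((m : ℝ) - 1)))
      = (k : ℝ) * ((m : ℝ) + 2 * k - 2) *
        ∫ x in sphere (0 : EuclideanSpace ℝ (Fin m)) 1,
          eval (fun j => x j) P * eval (fun j => x j) Q
          ∂(Measure.hausdorffMeasure ((m : ℝ) - 1)) := by
  have hlap : laplacian (P * Q) = 2 * ∑ i, pderiv i P * pderiv i Q := by
    rw [laplacian_mul, laplacian, laplacian, hPharm, hQharm]
    ring
  have h := integral_sphere_eval_laplacian (hPhom.mul hQhom)
  simp only [hlap, map_mul, map_sum, map_ofNat, integral_const_mul] at h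
  push_cast at h
  linear_combination h / 2

/-- For harmonic polynomials `p, q` on `ℝ^m`, homogeneous of degree `k`,
`∫_{S^{m-1}} ∇p · ∇q dH^{m-1} = k(m + 2k − 2) ∫_{S^{m-1}} p q dH^{m-1}`. -/
theorem stmt11 (m k : ℕ) (hm : 1 ≤ m)
    (P Q : MvPolynomial (Fin m) ℝ)
    (hPhom : P.IsHomogeneous k) (hQhom : Q.IsHomogeneous k)
    (hPharm : ∑ i : Fin m, pderiv i (pderiv i P) = 0)
    (hQharm : ∑ i : Fin m, pderiv i (pderiv i Q) = 0) :
    (∫ x in sphere (0 : EuclideanSpace ℝ (Fin m)) 1,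
        ∑ i : Fin m,
          eval (fun j => x j) (pderiv i P) * eval (fun j => x j) (pderiv i Q)
        ∂(Measure.hausdorffMeasure ((m : ℝ) - 1)))
      = (k : ℝ) * ((m : ℝ) + 2 * k - 2) *
        ∫ x in sphere (0 : EuclideanSpace ℝ (Fin m)) 1,
          eval (fun j => x j) P * eval (fun j => x j) Q
          ∂(Measure.hausdorffMeasure ((m : ℝ) - 1)) :=
  stmt11_general m k P Q hPhom hQhom hPharm hQharm
end

section
/- Let φ be a finite Borel measure on a Hilbert space with m-density 1 at 0, i.e. lim_{ρ→0} φ(B(0,ρ))/(α(m)ρ^m) = 1. Then the first moment b(φ,r) = ∫_{B(0,r)} y (r² − |y|²) dφ(y) satisfies |b(φ,r)| ≤ 2r(1 + exc^m(φ,0,r)) · ν(m) r^{m+2}, i.e. the normalized vector b(φ,r)/(ν(m)r^{m+2}) has norm at most 2r(1 + exc^m(φ,0,r)). -/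
open MeasureTheory Metric

/-- `α(m)`: the Lebesgue volume of the unit ball in `ℝ^m`. -/
noncomputable def unitBallVol (m : ℕ) : ℝ :=
  (volume (closedBall (0 : EuclideanSpace ℝ (Fin m)) 1)).toReal

/-- The normalized density ratio `φ(B(x,ρ)) / (α(m) ρ^m)`. -/
noncomputable def densRatio {H : Type*} [NormedAddCommGroup H] [InnerProductSpace ℝ H]
    [MeasurableSpace H] (m : ℕ) (φ : Measure H) (x : H) (ρ : ℝ) : ℝ :=
  (φ (closedBall x ρ)).toReal / (unitBallVol m * ρ ^ m)

/-- The positive spherical excess `exc^{m*}(φ,x,R)`. -/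
noncomputable def excUpper {H : Type*} [NormedAddCommGroup H] [InnerProductSpace ℝ H]
    [MeasurableSpace H] (m : ℕ) (φ : Measure H) (x : H) (R : ℝ) : ℝ :=
  sSup {e : ℝ | ∃ s t : ℝ, 0 < s ∧ s ≤ t ∧ t ≤ R ∧
    e = max (densRatio m φ x t - densRatio m φ x s) 0}

/-- The negative spherical excess `exc^m_*(φ,x,R)`. -/
noncomputable def excLower {H : Type*} [NormedAddCommGroup H] [InnerProductSpace ℝ H]
    [MeasurableSpace H] (m : ℕ) (φ : Measure H) (x : H) (R : ℝ) : ℝ :=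
  sSup {e : ℝ | ∃ s t : ℝ, 0 < s ∧ s ≤ t ∧ t ≤ R ∧
    e = max (densRatio m φ x s - densRatio m φ x t) 0}

/-- The spherical excess `exc^m(φ,x,R)`. -/
noncomputable def excFull {H : Type*} [NormedAddCommGroup H] [InnerProductSpace ℝ H]
    [MeasurableSpace H] (m : ℕ) (φ : Measure H) (x : H) (R : ℝ) : ℝ :=
  max (excLower m φ x R) (excUpper m φ x R)

/-! Since `|y| ≤ r` on the ball, the layer-cake formula gives
`|b(φ,r)| ≤ r ∫_0^{r²} φ(B(0, √(r² − t))) dt`. Comparing the density ratio at radius `s`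
with its limit `1` at radii `ρ → 0` gives `φ(B(0,s)) ≤ (1 + exc^m(φ,0,r)) α(m) sᵐ` for `0 < s ≤ r`,
and `∫_0^{r²} (r² − t)^{m/2} dt = 2 r^{m+2} / (m + 2)`. -/

open Filter Topology Set
open scoped ENNReal

lemma unitBallVol_pos (m : ℕ) : 0 < unitBallVol m :=
  ENNReal.toReal_pos (measure_closedBall_pos _ _ one_pos).ne' measure_closedBall_lt_top.ne

theorem intervalIntegral_sqrt_sub_pow (m : ℕ) {r : ℝ} (hr : 0 ≤ r) :
    ∫ t in (0 : ℝ)..r ^ 2, √(r ^ 2 - t) ^ m = 2 * r ^ (m + 2) / (m + 2) := by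
  have hm : (0 : ℝ) < m / 2 + 1 := by positivity
  have hpow : ∀ (n : ℕ) (t : ℝ), 0 ≤ t → √t ^ n = t ^ ((n : ℝ) / 2) := fun n t ht => by
    rw [← Real.rpow_natCast, Real.sqrt_eq_rpow, ← Real.rpow_mul ht]
    ring_nf
  have hr2 : (r ^ 2) ^ ((m : ℝ) / 2 + 1) = r ^ (m + 2) := by
    rw [show (m : ℝ) / 2 + 1 = ((m + 2 : ℕ) : ℝ) / 2 by push_cast; ring,
      ← hpow _ _ (sq_nonneg r), Real.sqrt_sq hr]
  calc ∫ t in (0 : ℝ)..r ^ 2, √(r ^ 2 - t) ^ m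
      = ∫ t in (0 : ℝ)..r ^ 2, √t ^ m := by
        rw [intervalIntegral.integral_comp_sub_left (fun t => √t ^ m), sub_self, sub_zero]
    _ = ∫ t in (0 : ℝ)..r ^ 2, t ^ ((m : ℝ) / 2) :=
        intervalIntegral.integral_congr fun t ht =>
          hpow m t (by rw [uIcc_of_le (sq_nonneg r)] at ht; exact ht.1)
    _ = 2 * r ^ (m + 2) / (m + 2) := by
        rw [integral_rpow (Or.inl (by linarith)), Real.zero_rpow hm.ne', sub_zero, hr2]
        field_simp

section LayerCake

variable {E : Type*} [NormedAddCommGroup E]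

lemma setOf_lt_sq_sub_norm_sq_subset_closedBall (r t : ℝ) :
    {y : E | t < r ^ 2 - ‖y‖ ^ 2} ⊆ closedBall 0 √(r ^ 2 - t) := fun y hy => by
  rw [mem_closedBall_zero_iff, Real.le_sqrt (norm_nonneg y) (by linarith [sq_nonneg ‖y‖, hy.out])]
  exact (lt_sub_comm.mp hy).le

variable [MeasurableSpace E] [OpensMeasurableSpace E]

theorem setLIntegral_sq_sub_norm_sq_le (μ : Measure E) {m : ℕ} {r : ℝ} {C : ℝ≥0∞} (hr : 0 < r)
    (hball : ∀ s, 0 < s → s ≤ r → μ (closedBall 0 s) ≤ C * ENNReal.ofReal (s ^ m)) :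
    ∫⁻ y in closedBall 0 r, ENNReal.ofReal (r ^ 2 - ‖y‖ ^ 2) ∂μ
      ≤ C * ENNReal.ofReal (2 * r ^ (m + 2) / (m + 2)) := by
  set ν := μ.restrict (closedBall (0 : E) r)
  have hnonneg : 0 ≤ᵐ[ν] fun y => r ^ 2 - ‖y‖ ^ 2 := by
    filter_upwards [ae_restrict_mem measurableSet_closedBall] with y hy
    have := pow_le_pow_left₀ (norm_nonneg y) (mem_closedBall_zero_iff.mp hy) 2
    simpa using this
  have hlevel : ∀ t ∈ Ioi (0 : ℝ), ν {y | t < r ^ 2 - ‖y‖ ^ 2}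
      ≤ (Ioo 0 (r ^ 2)).indicator (fun t => C * ENNReal.ofReal (√(r ^ 2 - t) ^ m)) t := by
    intro t ht
    rcases lt_or_ge t (r ^ 2) with htr | htr
    · rw [indicator_of_mem (show t ∈ Ioo 0 (r ^ 2) from ⟨ht, htr⟩)]
      refine (Measure.restrict_le_self _).trans <|
        (measure_mono (setOf_lt_sq_sub_norm_sq_subset_closedBall r t)).trans (hball _ ?_ ?_)
      · exact Real.sqrt_pos.mpr (by linarith)
      · exact (Real.sqrt_le_left hr.le).mpr (by linarith [ht.out])
    · have hempty : {y : E | t < r ^ 2 - ‖y‖ ^ 2} = ∅ :=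
        eq_empty_of_forall_notMem fun y hy => by linarith [hy.out, sq_nonneg ‖y‖]
      simp [hempty]
  calc ∫⁻ y in closedBall 0 r, ENNReal.ofReal (r ^ 2 - ‖y‖ ^ 2) ∂μ
      = ∫⁻ t in Ioi 0, ν {y | t < r ^ 2 - ‖y‖ ^ 2} :=
        lintegral_eq_lintegral_meas_lt _ hnonneg (by fun_prop)
    _ ≤ ∫⁻ t in Ioi 0,
          (Ioo 0 (r ^ 2)).indicator (fun t => C * ENNReal.ofReal (√(r ^ 2 - t) ^ m)) t :=
        setLIntegral_mono' measurableSet_Ioi hlevel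
    _ = C * ∫⁻ t in Ioo 0 (r ^ 2), ENNReal.ofReal (√(r ^ 2 - t) ^ m) := by
        rw [lintegral_indicator measurableSet_Ioo, Measure.restrict_restrict measurableSet_Ioo,
          inter_eq_self_of_subset_left Ioo_subset_Ioi_self, lintegral_const_mul _ (by fun_prop)]
    _ = C * ENNReal.ofReal (2 * r ^ (m + 2) / (m + 2)) := by
        rw [← ofReal_integral_eq_lintegral_ofReal, ← integral_Ioc_eq_integral_Ioo,
          ← intervalIntegral.integral_of_le (sq_nonneg r), intervalIntegral_sqrt_sub_pow m hr.le]
        · exact (Continuous.integrableOn_Icc (by fun_prop)).mono_set Ioo_subset_Icc_self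
        · exact Eventually.of_forall fun t => by positivity

theorem norm_setIntegral_sq_sub_norm_sq_smul_le [NormedSpace ℝ E] (μ : Measure E) {m : ℕ}
    {r C : ℝ} (hr : 0 < r) (hC : 0 ≤ C)
    (hball : ∀ s, 0 < s → s ≤ r → μ (closedBall 0 s) ≤ ENNReal.ofReal (C * s ^ m)) :
    ‖∫ y in closedBall 0 r, (r ^ 2 - ‖y‖ ^ 2) • y ∂μ‖ ≤ r * (C * (2 * r ^ (m + 2) / (m + 2))) := by
  have hweight : ∀ y ∈ closedBall (0 : E) r,
      ENNReal.ofReal ‖(r ^ 2 - ‖y‖ ^ 2) • y‖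
        ≤ ENNReal.ofReal r * ENNReal.ofReal (r ^ 2 - ‖y‖ ^ 2) := by
    intro y hy
    have hyr : ‖y‖ ≤ r := mem_closedBall_zero_iff.mp hy
    have hsq : 0 ≤ r ^ 2 - ‖y‖ ^ 2 := by nlinarith [norm_nonneg y]
    rw [norm_smul, Real.norm_of_nonneg hsq, ← ENNReal.ofReal_mul hr.le]
    exact ENNReal.ofReal_le_ofReal (by nlinarith [norm_nonneg y])
  have hball' : ∀ s, 0 < s → s ≤ r →
      μ (closedBall 0 s) ≤ ENNReal.ofReal C * ENNReal.ofReal (s ^ m) :=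
    fun s hs hsr => (hball s hs hsr).trans_eq (ENNReal.ofReal_mul hC)
  refine (norm_integral_le_lintegral_norm _).trans
    (ENNReal.toReal_le_of_le_ofReal (by positivity) ?_)
  calc ∫⁻ y in closedBall 0 r, ENNReal.ofReal ‖(r ^ 2 - ‖y‖ ^ 2) • y‖ ∂μ
      ≤ ∫⁻ y in closedBall 0 r, ENNReal.ofReal r * ENNReal.ofReal (r ^ 2 - ‖y‖ ^ 2) ∂μ :=
        setLIntegral_mono' measurableSet_closedBall hweight
    _ = ENNReal.ofReal r * ∫⁻ y in closedBall 0 r, ENNReal.ofReal (r ^ 2 - ‖y‖ ^ 2) ∂μ :=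
        lintegral_const_mul _ (by fun_prop)
    _ ≤ ENNReal.ofReal r * (ENNReal.ofReal C * ENNReal.ofReal (2 * r ^ (m + 2) / (m + 2))) := by
        gcongr
        exact setLIntegral_sq_sub_norm_sq_le μ hr hball'
    _ = ENNReal.ofReal (r * (C * (2 * r ^ (m + 2) / (m + 2)))) := by
        rw [ENNReal.ofReal_mul hr.le, ENNReal.ofReal_mul hC]

end LayerCake

section Density

variable {H : Type*} [NormedAddCommGroup H] [InnerProductSpace ℝ H] [MeasurableSpace H]
  {φ : Measure H} {m : ℕ} {x : H} {θ R s : ℝ}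

lemma densRatio_nonneg (hs : 0 ≤ s) : 0 ≤ densRatio m φ x s :=
  div_nonneg ENNReal.toReal_nonneg (mul_nonneg (unitBallVol_pos m).le (pow_nonneg hs m))

lemma densRatio_mul (hs : 0 < s) :
    densRatio m φ x s * (unitBallVol m * s ^ m) = (φ (closedBall x s)).toReal :=
  div_mul_cancel₀ _ (mul_pos (unitBallVol_pos m) (pow_pos hs m)).ne'

lemma densRatio_le_measureReal_univ_div [IsFiniteMeasure φ] {δ : ℝ} (hδ : 0 < δ) (hs : δ ≤ s) :
    densRatio m φ x s ≤ (φ univ).toReal / (unitBallVol m * δ ^ m) := by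
  have hα := unitBallVol_pos m
  exact div_le_div₀ ENNReal.toReal_nonneg (measureReal_mono (subset_univ _))
    (by positivity) (by gcongr)

lemma bddAbove_densRatio [IsFiniteMeasure φ]
    (hdens : Tendsto (densRatio m φ x) (𝓝[>] 0) (𝓝 θ)) :
    BddAbove (densRatio m φ x '' Ioi 0) := by
  obtain ⟨δ, hδ, hsmall⟩ := Metric.tendsto_nhdsWithin_nhds.mp hdens 1 one_pos
  refine ⟨max (θ + 1) ((φ univ).toReal / (unitBallVol m * δ ^ m)), ?_⟩
  rintro _ ⟨s, hs, rfl⟩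
  rcases lt_or_ge s δ with hsδ | hsδ
  · have := hsmall hs (by rwa [Real.dist_0_eq_abs, abs_of_pos hs])
    exact le_max_of_le_left (by linarith [(abs_lt.mp (Real.dist_eq _ _ ▸ this)).2])
  · exact le_max_of_le_right (densRatio_le_measureReal_univ_div hδ hsδ)

lemma excUpper_nonneg : 0 ≤ excUpper m φ x R :=
  Real.sSup_nonneg (by rintro _ ⟨s, t, -, -, -, rfl⟩; exact le_max_right _ _)

lemma densRatio_sub_le_excUpper [IsFiniteMeasure φ]
    (hdens : Tendsto (densRatio m φ x) (𝓝[>] 0) (𝓝 θ)) {t : ℝ}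
    (hs : 0 < s) (hst : s ≤ t) (htR : t ≤ R) :
    densRatio m φ x t - densRatio m φ x s ≤ excUpper m φ x R := by
  obtain ⟨K, hK⟩ := bddAbove_densRatio hdens
  have hbdd : BddAbove {e : ℝ | ∃ s t : ℝ, 0 < s ∧ s ≤ t ∧ t ≤ R ∧
      e = max (densRatio m φ x t - densRatio m φ x s) 0} := by
    refine ⟨K, ?_⟩
    rintro _ ⟨s, t, hs, hst, -, rfl⟩
    have hKt := hK (mem_image_of_mem _ (show t ∈ Ioi 0 from hs.trans_le hst))
    exact max_le (by linarith [densRatio_nonneg (m := m) (φ := φ) (x := x) hs.le])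
      ((densRatio_nonneg (hs.le.trans hst)).trans hKt)
  exact (le_max_left _ _).trans (le_csSup hbdd ⟨s, t, hs, hst, htR, rfl⟩)

lemma densRatio_le_add_excUpper [IsFiniteMeasure φ]
    (hdens : Tendsto (densRatio m φ x) (𝓝[>] 0) (𝓝 θ)) (hs : 0 < s) (hsR : s ≤ R) :
    densRatio m φ x s ≤ θ + excUpper m φ x R := by
  have hev : ∀ᶠ ρ in 𝓝[>] 0, densRatio m φ x s - excUpper m φ x R ≤ densRatio m φ x ρ := by
    filter_upwards [Ioo_mem_nhdsGT hs] with ρ hρ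
    linarith [densRatio_sub_le_excUpper hdens hρ.1 hρ.2.le hsR]
  linarith [ge_of_tendsto hdens hev]

theorem measure_closedBall_le_of_tendsto_densRatio [IsFiniteMeasure φ]
    (hdens : Tendsto (densRatio m φ x) (𝓝[>] 0) (𝓝 θ)) (hs : 0 < s) (hsR : s ≤ R) :
    φ (closedBall x s) ≤ ENNReal.ofReal ((θ + excUpper m φ x R) * unitBallVol m * s ^ m) := by
  rw [← ENNReal.ofReal_toReal (measure_ne_top φ _), ← densRatio_mul hs, ← mul_assoc]
  have := unitBallVol_pos m
  exact ENNReal.ofReal_le_ofReal (by gcongr; exact densRatio_le_add_excUpper hdens hs hsR)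

end Density

theorem stmt17_general {H : Type*} [NormedAddCommGroup H] [InnerProductSpace ℝ H]
    [MeasurableSpace H] [BorelSpace H]
    (φ : Measure H) [IsFiniteMeasure φ] (m : ℕ) (r : ℝ) (hr : 0 < r)
    (hdens : Filter.Tendsto (fun ρ => densRatio m φ 0 ρ)
      (nhdsWithin 0 (Set.Ioi 0)) (nhds 1)) :
    ‖∫ y in closedBall (0 : H) r, (r ^ 2 - ‖y‖ ^ 2) • y ∂φ‖
      ≤ 2 * r * (1 + excFull m φ 0 r) * ((unitBallVol m / (m + 2)) * r ^ (m + 2)) := by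
  have hα := unitBallVol_pos m
  have hexc : excUpper m φ 0 r ≤ excFull m φ 0 r := le_max_right _ _
  have hC : 0 ≤ (1 + excFull m φ 0 r) * unitBallVol m := by
    nlinarith [excUpper_nonneg (m := m) (φ := φ) (x := 0) (R := r)]
  have hball : ∀ s, 0 < s → s ≤ r →
      φ (closedBall 0 s) ≤ ENNReal.ofReal ((1 + excFull m φ 0 r) * unitBallVol m * s ^ m) :=
    fun s hs hsr => (measure_closedBall_le_of_tendsto_densRatio hdens hs hsr).trans
      (ENNReal.ofReal_le_ofReal (by gcongr))
  exact (norm_setIntegral_sq_sub_norm_sq_smul_le φ hr hC hball).trans_eq (by ring)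

/-- Lemma 4.8: if `Θ^m(φ,0) = 1`, then the first moment
`b(φ,r) = ∫_{B(0,r)} y (r² − |y|²) dφ(y)` satisfies
`|b(φ,r)| ≤ 2r(1 + exc^m(φ,0,r)) ν(m) r^{m+2}` where `ν(m) = α(m)/(m+2)`. -/
theorem stmt17 {H : Type*} [NormedAddCommGroup H] [InnerProductSpace ℝ H]
    [CompleteSpace H] [MeasurableSpace H] [BorelSpace H]
    (φ : Measure H) [IsFiniteMeasure φ] (m : ℕ) (r : ℝ) (hr : 0 < r)
    (hdens : Filter.Tendsto (fun ρ => densRatio m φ 0 ρ)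
      (nhdsWithin 0 (Set.Ioi 0)) (nhds 1)) :
    ‖∫ y in closedBall (0 : H) r, (r ^ 2 - ‖y‖ ^ 2) • y ∂φ‖
      ≤ 2 * r * (1 + excFull m φ 0 r) * ((unitBallVol m / (m + 2)) * r ^ (m + 2)) :=
  stmt17_general φ m r hr hdens
end
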